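/- arXiv:1106.0772 — 5 statements merged into one kernel-verified Lean document; each statement's English description precedes it below -/
import Mathlib

section
/- Let G be a 2-group and X a left G-module. The following are equivalent: (1) X is a left G-torsor; (2) X has at least one object and for every object x of X the functor G → X, g ↦ g ▷ x, is an equivalence of categories; (3) X is equivalent as a left G-module to the trivial left G-module G. -/
namespace BraidedExt

open CategoryTheory MonoidalCategory

universe v₁ v₂ v₃ u₁ u₂ u₃

variable (C : Type u₁) [Category.{v₁} C] [MonoidalCategory C]

/-- A left module category over a monoidal category `C`: a category `X` with an action
bifunctor, associativity and unit isomorphisms, satisfying naturality, pentagon and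
triangle coherence (equivalently, a pseudofunctor from the delooping of `C` to `Cat`). -/
structure LeftModule (X : Type u₂) [Category.{v₂} X] where
  act : C ⥤ X ⥤ X
  assoc : ∀ (c c' : C) (x : X), (act.obj (c ⊗ c')).obj x ≅ (act.obj c).obj ((act.obj c').obj x)
  unitor : ∀ x : X, (act.obj (𝟙_ C)).obj x ≅ x
  assoc_naturality :
    ∀ {c₁ c₂ c₁' c₂' : C} {x₁ x₂ : X} (f : c₁ ⟶ c₂) (f' : c₁' ⟶ c₂') (g : x₁ ⟶ x₂),
      (act.map (f ⊗ₘ f')).app x₁ ≫ (act.obj (c₂ ⊗ c₂')).map g ≫ (assoc c₂ c₂' x₂).hom =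
        (assoc c₁ c₁' x₁).hom ≫ (act.map f).app ((act.obj c₁').obj x₁) ≫
          (act.obj c₂).map ((act.map f').app x₁ ≫ (act.obj c₂').map g)
  unitor_naturality : ∀ {x₁ x₂ : X} (g : x₁ ⟶ x₂),
    (act.obj (𝟙_ C)).map g ≫ (unitor x₂).hom = (unitor x₁).hom ≫ g
  pentagon : ∀ (c c' c'' : C) (x : X),
    (act.map (α_ c c' c'').hom).app x ≫ (assoc c (c' ⊗ c'') x).hom ≫
        (act.obj c).map (assoc c' c'' x).hom =
      (assoc (c ⊗ c') c'' x).hom ≫ (assoc c c' ((act.obj c'').obj x)).hom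
  triangle_right : ∀ (c : C) (x : X),
    (act.map (ρ_ c).hom).app x = (assoc c (𝟙_ C) x).hom ≫ (act.obj c).map (unitor x).hom
  triangle_left : ∀ (c : C) (x : X),
    (act.map (λ_ c).hom).app x = (assoc (𝟙_ C) c x).hom ≫ (unitor ((act.obj c).obj x)).hom

variable {C}
variable {X : Type u₂} [Category.{v₂} X] {Y : Type u₃} [Category.{v₃} Y]

/-- A morphism of left `C`-module categories: a functor together with coherent natural
isomorphisms `F (c ▷ x) ≅ c ▷ F x`. -/
structure ModHom (M : LeftModule C X) (N : LeftModule C Y) where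
  F : X ⥤ Y
  strength : ∀ (c : C) (x : X), F.obj ((M.act.obj c).obj x) ≅ (N.act.obj c).obj (F.obj x)
  strength_naturality : ∀ {c₁ c₂ : C} (f : c₁ ⟶ c₂) {x₁ x₂ : X} (g : x₁ ⟶ x₂),
    F.map ((M.act.map f).app x₁ ≫ (M.act.obj c₂).map g) ≫ (strength c₂ x₂).hom =
      (strength c₁ x₁).hom ≫ (N.act.map f).app (F.obj x₁) ≫ (N.act.obj c₂).map (F.map g)
  strength_assoc : ∀ (c c' : C) (x : X),
    F.map (M.assoc c c' x).hom ≫ (strength c ((M.act.obj c').obj x)).hom ≫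
        (N.act.obj c).map (strength c' x).hom =
      (strength (c ⊗ c') x).hom ≫ (N.assoc c c' (F.obj x)).hom
  strength_unit : ∀ x : X,
    F.map (M.unitor x).hom = (strength (𝟙_ C) x).hom ≫ (N.unitor (F.obj x)).hom

/-- The data exhibiting a morphism of left `C`-modules as an equivalence of `C`-modules:
a quasi-inverse which is itself a module morphism, together with unit and counit natural
isomorphisms compatible with the module structure. -/
structure ModEquivData {M : LeftModule C X} {N : LeftModule C Y} (F : ModHom M N) where
  G : ModHom N M
  η : 𝟭 X ≅ F.F ⋙ G.F
  ε : G.F ⋙ F.F ≅ 𝟭 Y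
  η_mod : ∀ (c : C) (x : X),
    (M.act.obj c).map (η.hom.app x) =
      η.hom.app ((M.act.obj c).obj x) ≫ G.F.map ((F.strength c x).hom) ≫
        (G.strength c (F.F.obj x)).hom
  ε_mod : ∀ (c : C) (y : Y),
    F.F.map ((G.strength c y).hom) ≫ (F.strength c (G.F.obj y)).hom ≫
        (N.act.obj c).map (ε.hom.app y) =
      ε.hom.app ((N.act.obj c).obj y)

/-- A morphism of left `C`-modules is an equivalence of modules if it admits a
quasi-inverse module morphism with invertible module 2-cells. -/
def IsModEquiv {M : LeftModule C X} {N : LeftModule C Y} (F : ModHom M N) : Prop :=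
  Nonempty (ModEquivData F)


/-- A 2-group: a monoidal category whose underlying category is a groupoid and all of
whose objects are tensor-invertible. -/
class IsTwoGroup (G : Type u₁) [Category.{v₁} G] [MonoidalCategory G] : Prop where
  isIso : ∀ {g h : G} (f : g ⟶ h), IsIso f
  inv_obj : ∀ g : G, ∃ g' : G, Nonempty (g ⊗ g' ≅ 𝟙_ G) ∧ Nonempty (g' ⊗ g ≅ 𝟙_ G)

variable (C)

/-- The characteristic functor `(c, x) ↦ (c ▷ x, x)` of a module category. -/
def chi {X : Type u₂} [Category.{v₂} X] (M : LeftModule C X) : C × X ⥤ X × X where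
  obj p := ((M.act.obj p.1).obj p.2, p.2)
  map {p q} f := ((M.act.map f.1).app p.2 ≫ (M.act.obj q.1).map f.2, f.2)
  map_id p := by
    dsimp
    rw [CategoryTheory.Functor.map_id, CategoryTheory.Functor.map_id]
    dsimp
    simp
  map_comp {p q r} f g := by
    dsimp
    congr 1
    simp only [CategoryTheory.Functor.map_comp, NatTrans.comp_app, Category.assoc]
    rw [NatTrans.naturality_assoc]

/-- A left module `X` over a 2-group `G` is a torsor if `X` is nonempty and the
characteristic functor `G × X → X × X` is an equivalence of categories. -/
def IsTorsor {X : Type u₂} [Category.{v₂} X] (M : LeftModule C X) : Prop :=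
  Nonempty X ∧ (chi C M).IsEquivalence

/-- The trivial left module: `C` acting on itself by left tensor multiplication. -/
def trivialModule : LeftModule C C where
  act := curriedTensor C
  assoc c c' x := α_ c c' x
  unitor x := λ_ x
  assoc_naturality f f' g := by
    simp [MonoidalCategory.tensorHom_def]
  unitor_naturality g := by simp
  pentagon c c' c'' x := by
    simpa using MonoidalCategory.pentagon c c' c'' x
  triangle_right c x := by
    simpa using (MonoidalCategory.triangle c x).symm
  triangle_left c x := by
    simp only [curriedTensor_map_app, curriedTensor_obj_obj]
    rw [leftUnitor_tensor_hom, Iso.hom_inv_id_assoc]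

/-- The orbit functor `g ↦ g ▷ x` of a point of a module category. -/
def orbit {X : Type u₂} [Category.{v₂} X] (M : LeftModule C X) (x : X) : C ⥤ X where
  obj g := (M.act.obj g).obj x
  map f := (M.act.map f).app x
  map_id g := by
    show (M.act.map (𝟙 g)).app x = _
    rw [M.act.map_id]
    rfl
  map_comp f g := by
    show (M.act.map (f ≫ g)).app x = _
    rw [M.act.map_comp]
    rfl


section Basic

variable {C}

@[simp] lemma chi_obj (M : LeftModule C X) (p : C × X) :
    (chi C M).obj p = ((M.act.obj p.1).obj p.2, p.2) := rfl

@[simp] lemma chi_map (M : LeftModule C X) {p q : C × X} (f : p ⟶ q) :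
    (chi C M).map f = ((M.act.map f.1).app p.2 ≫ (M.act.obj q.1).map f.2, f.2) := rfl

@[simp] lemma orbit_obj (M : LeftModule C X) (x : X) (g : C) :
    (orbit C M x).obj g = (M.act.obj g).obj x := rfl

@[simp] lemma orbit_map (M : LeftModule C X) (x : X) {g g' : C} (f : g ⟶ g') :
    (orbit C M x).map f = (M.act.map f).app x := rfl

lemma LeftModule.assoc_naturality_right (M : LeftModule C X) (c c' : C) {x₁ x₂ : X}
    (g : x₁ ⟶ x₂) :
    (M.act.obj (c ⊗ c')).map g ≫ (M.assoc c c' x₂).hom =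
      (M.assoc c c' x₁).hom ≫ (M.act.obj c).map ((M.act.obj c').map g) := by
  simpa using M.assoc_naturality (𝟙 c) (𝟙 c') g

end Basic

section Characteristic

variable {C} (M : LeftModule C X)

lemma orbit_faithful_of_chi [(chi C M).Faithful] (x : X) : (orbit C M x).Faithful where
  map_injective {g g'} {f f'} h := by
    have : (chi C M).map ((f, 𝟙 x) : (g, x) ⟶ (g', x)) = (chi C M).map (f', 𝟙 x) := by
      simpa using h
    exact congrArg Prod.fst ((chi C M).map_injective this)

lemma orbit_full_of_chi [(chi C M).Full] (x : X) : (orbit C M x).Full where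
  map_surjective {g g'} u := by
    obtain ⟨m, hm⟩ := (chi C M).map_surjective
      ((u, 𝟙 x) : (chi C M).obj (g, x) ⟶ (chi C M).obj (g', x))
    have hm₂ : m.2 = 𝟙 x := congrArg Prod.snd hm
    have hm₁ := congrArg Prod.fst hm
    simp only [chi_map, hm₂, CategoryTheory.Functor.map_id, Category.comp_id] at hm₁
    exact ⟨m.1, hm₁⟩

lemma orbit_essSurj_of_chi [(chi C M).EssSurj] (x : X) : (orbit C M x).EssSurj where
  mem_essImage y := by
    let ψ := (chi C M).objObjPreimageIso (y, x)
    exact ⟨((chi C M).objPreimage (y, x)).1,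
      ⟨(M.act.obj _).mapIso ((CategoryTheory.Prod.snd X X).mapIso ψ).symm ≪≫
        (CategoryTheory.Prod.fst X X).mapIso ψ⟩⟩

lemma orbit_isEquivalence_of_chi [(chi C M).IsEquivalence] (x : X) :
    (orbit C M x).IsEquivalence :=
  have := orbit_faithful_of_chi M x
  have := orbit_full_of_chi M x
  have := orbit_essSurj_of_chi M x
  { }

variable (h : ∀ x : X, (orbit C M x).IsEquivalence)
include h

lemma chi_faithful_of_orbit [IsGroupoid X] : (chi C M).Faithful where
  map_injective {p q} {m m'} hmm' := by
    have h₂ : m.2 = m'.2 := by simpa using congrArg Prod.snd hmm'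
    have h₁ : (orbit C M p.2).map m.1 ≫ (M.act.obj q.1).map m'.2 =
        (orbit C M p.2).map m'.1 ≫ (M.act.obj q.1).map m'.2 := by
      simpa [h₂] using congrArg Prod.fst hmm'
    have := (h p.2).faithful
    exact Prod.ext
      ((orbit C M p.2).map_injective ((cancel_mono ((M.act.obj q.1).map m'.2)).mp h₁)) h₂

lemma chi_full_of_orbit [IsGroupoid X] : (chi C M).Full where
  map_surjective {p q} m := by
    have := (h p.2).full
    let u : p.2 ⟶ q.2 := m.2
    obtain ⟨f, hf⟩ := (orbit C M p.2).map_surjective (m.1 ≫ (M.act.obj q.1).map (inv u))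
    refine ⟨(f, m.2), Prod.ext ?_ rfl⟩
    simp only [orbit_map] at hf
    simp [hf]

lemma chi_essSurj_of_orbit : (chi C M).EssSurj where
  mem_essImage p := by
    have := h p.2
    exact ⟨((orbit C M p.2).objPreimage p.1, p.2),
      ⟨Iso.prod ((orbit C M p.2).objObjPreimageIso p.1) (Iso.refl p.2)⟩⟩

lemma chi_isEquivalence_of_orbit [IsGroupoid X] : (chi C M).IsEquivalence :=
  have := chi_faithful_of_orbit M h
  have := chi_full_of_orbit M h
  have := chi_essSurj_of_orbit M h
  { }

end Characteristic

namespace ModHom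

variable {C} {M : LeftModule C X} {N : LeftModule C Y} (F : ModHom M N)

lemma strength_naturality_left {c₁ c₂ : C} (f : c₁ ⟶ c₂) (x : X) :
    F.F.map ((M.act.map f).app x) ≫ (F.strength c₂ x).hom =
      (F.strength c₁ x).hom ≫ (N.act.map f).app (F.F.obj x) := by
  simpa using F.strength_naturality f (𝟙 x)

lemma strength_naturality_right (c : C) {x₁ x₂ : X} (g : x₁ ⟶ x₂) :
    F.F.map ((M.act.obj c).map g) ≫ (F.strength c x₂).hom =
      (F.strength c x₁).hom ≫ (N.act.obj c).map (F.F.map g) := by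
  simpa using F.strength_naturality (𝟙 c) g

lemma map_act_map_app {c₁ c₂ : C} (f : c₁ ⟶ c₂) (x : X) :
    F.F.map ((M.act.map f).app x) =
      (F.strength c₁ x).hom ≫ (N.act.map f).app (F.F.obj x) ≫ (F.strength c₂ x).inv := by
  rw [← Category.assoc, Iso.eq_comp_inv, strength_naturality_left]

lemma map_act_obj_map (c : C) {x₁ x₂ : X} (g : x₁ ⟶ x₂) :
    F.F.map ((M.act.obj c).map g) =
      (F.strength c x₁).hom ≫ (N.act.obj c).map (F.F.map g) ≫ (F.strength c x₂).inv := by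
  rw [← Category.assoc, Iso.eq_comp_inv, strength_naturality_right]

lemma map_assoc_hom (c c' : C) (x : X) :
    F.F.map (M.assoc c c' x).hom =
      (F.strength (c ⊗ c') x).hom ≫ (N.assoc c c' (F.F.obj x)).hom ≫
        (N.act.obj c).map (F.strength c' x).inv ≫ (F.strength c ((M.act.obj c').obj x)).inv := by
  rw [← reassoc_of% (F.strength_assoc c c' x)]
  simp

section Inverse

variable {G : Y ⥤ X} (η : 𝟭 X ≅ F.F ⋙ G) (ε : G ⋙ F.F ≅ 𝟭 Y)
  (tri : ∀ x : X, F.F.map (η.hom.app x) ≫ ε.hom.app (F.F.obj x) = 𝟙 (F.F.obj x))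

lemma map_inv_map {y₁ y₂ : Y} (g : y₁ ⟶ y₂) :
    F.F.map (G.map g) = ε.hom.app y₁ ≫ g ≫ ε.inv.app y₂ :=
  (NatIso.naturality_2 ε g).symm

include tri in
lemma map_unit_hom_app (x : X) : F.F.map (η.hom.app x) = ε.inv.app (F.F.obj x) :=
  (Iso.comp_hom_eq_id (ε.app (F.F.obj x))).mp (tri x)

noncomputable def invStrength (c : C) (y : Y) :
    G.obj ((N.act.obj c).obj y) ≅ (M.act.obj c).obj (G.obj y) :=
  have := Functor.IsEquivalence.mk' G η ε
  F.F.preimageIso (ε.app _ ≪≫ (N.act.obj c).mapIso (ε.app y).symm ≪≫ (F.strength c (G.obj y)).symm)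

@[simp]
lemma map_invStrength_hom (c : C) (y : Y) :
    F.F.map (F.invStrength η ε c y).hom =
      ε.hom.app ((N.act.obj c).obj y) ≫ (N.act.obj c).map (ε.inv.app y) ≫
        (F.strength c (G.obj y)).inv := by
  simp [invStrength]

noncomputable def inverse : ModHom N M where
  F := G
  strength := F.invStrength η ε
  strength_naturality {_ _} f {_ _} g := by
    have := Functor.IsEquivalence.mk' G η ε
    apply F.F.map_injective
    simp [map_act_map_app, map_act_obj_map, map_inv_map F ε]
  strength_assoc c c' y := by
    have := Functor.IsEquivalence.mk' G η ε
    apply F.F.map_injective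
    simp [map_act_obj_map, map_assoc_hom, map_inv_map F ε]
    rw [reassoc_of% N.assoc_naturality_right]
  strength_unit y := by
    have := Functor.IsEquivalence.mk' G η ε
    apply F.F.map_injective
    simp [strength_unit, map_inv_map F ε]
    exact (N.unitor_naturality _).symm

noncomputable def modEquivData : ModEquivData F where
  G := F.inverse η ε
  η := η
  ε := ε
  η_mod c x := by
    have := Functor.IsEquivalence.mk' G η ε
    apply F.F.map_injective
    simp [inverse, map_act_obj_map, map_unit_hom_app F η ε tri, map_inv_map F ε]
  ε_mod c y := by
    simp [inverse]

end Inverse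

theorem isModEquiv_of_isEquivalence [F.F.IsEquivalence] : IsModEquiv F :=
  ⟨F.modEquivData F.F.asEquivalence.unitIso F.F.asEquivalence.counitIso
    F.F.asEquivalence.functor_unit_comp⟩

def chiIso : (𝟭 C).prod F.F ⋙ chi C N ≅ chi C M ⋙ F.F.prod F.F :=
  NatIso.ofComponents (fun p => Iso.prod (F.strength p.1 p.2).symm (Iso.refl _)) fun m => by
    ext
    · simp [map_act_map_app, map_act_obj_map]
    · simp

theorem chi_isEquivalence [F.F.IsEquivalence] [(chi C M).IsEquivalence] :
    (chi C N).IsEquivalence :=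
  have : ((𝟭 C).prod F.F).IsEquivalence :=
    (Equivalence.prod .refl F.F.asEquivalence).isEquivalence_functor
  have : (chi C M ⋙ F.F.prod F.F).IsEquivalence :=
    ((chi C M).asEquivalence.trans (F.F.asEquivalence.prod F.F.asEquivalence)).isEquivalence_functor
  have := Functor.isEquivalence_of_iso F.chiIso.symm
  Functor.isEquivalence_of_comp_left ((𝟭 C).prod F.F) (chi C N)

end ModHom

variable {C} in
def orbitHom (M : LeftModule C X) (x : X) : ModHom (trivialModule C) M where
  F := orbit C M x
  strength c g := M.assoc c g x
  strength_naturality {_ _} f {_ _} k := by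
    have h := M.assoc_naturality f k (𝟙 x)
    simp only [CategoryTheory.Functor.map_id, Category.id_comp, Category.comp_id] at h
    simp only [orbit_map, trivialModule, curriedTensor_map_app, curriedTensor_obj_map,
      ← MonoidalCategory.tensorHom_def]
    exact h
  strength_assoc c c' g := M.pentagon c c' g x
  strength_unit g := M.triangle_left g x

namespace IsTwoGroup

variable {G : Type u₁} [Category.{v₁} G] [MonoidalCategory G] [IsTwoGroup G]

instance : IsGroupoid G := ⟨IsTwoGroup.isIso⟩

theorem isEquivalence_tensorRight (g : G) : (tensorRight g).IsEquivalence := by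
  obtain ⟨g', ⟨i⟩, ⟨j⟩⟩ := IsTwoGroup.inv_obj g
  refine Functor.IsEquivalence.mk' (tensorRight g')
    (NatIso.ofComponents (fun x => (ρ_ x).symm ≪≫ whiskerLeftIso x i.symm ≪≫ (α_ x g g').symm) ?_)
    (NatIso.ofComponents (fun x => α_ x g' g ≪≫ whiskerLeftIso x j ≪≫ ρ_ x) ?_)
  · intro x x' f
    simp only [Functor.id_obj, Functor.comp_obj, Functor.flip_obj_obj, curriedTensor_obj_obj,
      Iso.trans_hom, Iso.symm_hom, whiskerLeftIso_hom, Functor.id_map, Functor.comp_map,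
      Functor.flip_obj_map, curriedTensor_map_app, Category.assoc]
    rw [rightUnitor_inv_naturality_assoc, ← whisker_exchange_assoc,
      associator_inv_naturality_left]
  · intro x x' f
    simp only [Functor.comp_obj, Functor.flip_obj_obj, curriedTensor_obj_obj, Functor.id_obj,
      Iso.trans_hom, whiskerLeftIso_hom, Functor.comp_map, Functor.flip_obj_map,
      curriedTensor_map_app, Functor.id_map, Category.assoc]
    rw [associator_naturality_left_assoc, ← whisker_exchange_assoc, rightUnitor_naturality]

theorem isTorsor_trivialModule : IsTorsor G (trivialModule G) :=
  ⟨⟨𝟙_ G⟩, chi_isEquivalence_of_orbit _ fun x => isEquivalence_tensorRight x⟩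

end IsTwoGroup

/-- For a left module `X` over a 2-group `G`, the following are
equivalent: (1) `X` is a torsor; (2) `X` is nonempty and every orbit functor
`g ↦ g ▷ x` is an equivalence of categories; (3) `X` is equivalent, as a `G`-module,
to the trivial left `G`-module. -/
theorem torsor_tfae {G : Type u₁} [Category.{v₁} G] [MonoidalCategory G] [IsTwoGroup G]
    {X : Type u₂} [Category.{v₂} X] (M : LeftModule G X) :
    List.TFAE [IsTorsor G M,
      Nonempty X ∧ ∀ x : X, (orbit G M x).IsEquivalence,
      ∃ F : ModHom (trivialModule G) M, IsModEquiv F] := by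
  tfae_have 1 → 2
  | ⟨hX, hχ⟩ => ⟨hX, orbit_isEquivalence_of_chi M⟩
  tfae_have 2 → 3
  | ⟨⟨x⟩, h⟩ =>
    have : (orbitHom M x).F.IsEquivalence := h x
    ⟨orbitHom M x, (orbitHom M x).isModEquiv_of_isEquivalence⟩
  tfae_have 3 → 1
  | ⟨F, ⟨d⟩⟩ => by
    have := Functor.IsEquivalence.mk' d.G.F d.η d.ε
    have := (IsTwoGroup.isTorsor_trivialModule (G := G)).2
    exact ⟨⟨F.F.obj (𝟙_ G)⟩, F.chi_isEquivalence⟩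
  tfae_finish

end BraidedExt
end

section
/- Let G and K be groups. Isomorphism classes of extensions of G by K are in bijection with isomorphism classes of monoidal functors from the discrete monoidal category G (objects the elements of G, only identity morphisms, tensor product given by multiplication in G) to the 2-group BiTors(K) of K-bitorsors. The bijection sends an extension ∂ : E → G to the functor g ↦ ∂⁻¹(g). -/
namespace BraidedExt

universe u

open CategoryTheory

/-- A bitorsor over a group `K`: a nonempty set with commuting left and right `K`-actions,
each of which is free and transitive. -/
structure Bitorsor (K : Type u) [Group K] : Type (u + 1) where
  carrier : Type u
  nonempty : Nonempty carrier
  act : K → carrier → carrier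
  ract : carrier → K → carrier
  one_act : ∀ x, act 1 x = x
  mul_act : ∀ k k' x, act (k * k') x = act k (act k' x)
  ract_one : ∀ x, ract x 1 = x
  ract_mul : ∀ x k k', ract x (k * k') = ract (ract x k) k'
  act_ract : ∀ k x k', act k (ract x k') = ract (act k x) k'
  left_free_trans : ∀ x y, ∃! k, act k x = y
  right_free_trans : ∀ x y, ∃! k, ract x k = y

variable {K : Type u} [Group K]

/-- A morphism of `K`-bitorsors: a bijection equivariant for both actions. -/
structure BtHom (X Y : Bitorsor K) : Type u where
  toFun : X.carrier → Y.carrier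
  bij : Function.Bijective toFun
  map_act : ∀ k x, toFun (X.act k x) = Y.act k (toFun x)
  map_ract : ∀ x k, toFun (X.ract x k) = Y.ract (toFun x) k

theorem BtHom.ext' {X Y : Bitorsor K} {f g : BtHom X Y}
    (h : ∀ x, f.toFun x = g.toFun x) : f = g := by
  have h' : f.toFun = g.toFun := funext h
  cases f; cases g; cases h'; rfl

/-- Any map equivariant for the two actions between bitorsors is automatically
bijective. -/
theorem bijective_of_equivariant {X Y : Bitorsor K} (f : X.carrier → Y.carrier)
    (hf : ∀ k x, f (X.act k x) = Y.act k (f x)) : Function.Bijective f := by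
  obtain ⟨x₀⟩ := X.nonempty
  constructor
  · intro a b hab
    obtain ⟨k, hk, -⟩ := X.left_free_trans x₀ a
    obtain ⟨k', hk', -⟩ := X.left_free_trans x₀ b
    subst hk hk'
    rw [hf, hf] at hab
    rw [(Y.left_free_trans (f x₀) (Y.act k (f x₀))).unique rfl hab.symm]
  · intro y
    obtain ⟨k, hk, -⟩ := Y.left_free_trans (f x₀) y
    exact ⟨X.act k x₀, by rw [hf, hk]⟩

/-- Build a bitorsor morphism from an equivariant map. -/
def mkHom {X Y : Bitorsor K} (f : X.carrier → Y.carrier)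
    (hact : ∀ k x, f (X.act k x) = Y.act k (f x))
    (hract : ∀ x k, f (X.ract x k) = Y.ract (f x) k) : BtHom X Y :=
  ⟨f, bijective_of_equivariant f hact, hact, hract⟩

instance : Category (Bitorsor K) where
  Hom := BtHom
  id X := mkHom id (fun _ _ => rfl) (fun _ _ => rfl)
  comp f g := mkHom (g.toFun ∘ f.toFun)
    (fun k x => by simp [f.map_act, g.map_act])
    (fun x k => by simp [f.map_ract, g.map_ract])
  id_comp f := BtHom.ext' fun x => rfl
  comp_id f := BtHom.ext' fun x => rfl
  assoc f g h := BtHom.ext' fun x => rfl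

@[ext]
theorem BtHom.hom_ext {X Y : Bitorsor K} {f g : X ⟶ Y}
    (h : ∀ x, f.toFun x = g.toFun x) : f = g := BtHom.ext' h

/-- The inverse of a bitorsor morphism. -/
noncomputable def BtHom.inv {X Y : Bitorsor K} (f : BtHom X Y) : BtHom Y X where
  toFun := (Equiv.ofBijective f.toFun f.bij).symm
  bij := (Equiv.ofBijective f.toFun f.bij).symm.bijective
  map_act := fun k y => by
    have h1 : ∀ z, f.toFun ((Equiv.ofBijective f.toFun f.bij).symm z) = z := fun z =>
      (Equiv.ofBijective f.toFun f.bij).apply_symm_apply z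
    apply f.bij.injective
    rw [f.map_act, h1, h1]
  map_ract := fun y k => by
    have h1 : ∀ z, f.toFun ((Equiv.ofBijective f.toFun f.bij).symm z) = z := fun z =>
      (Equiv.ofBijective f.toFun f.bij).apply_symm_apply z
    apply f.bij.injective
    rw [f.map_ract, h1, h1]

/-- Every bitorsor morphism is an isomorphism. -/
noncomputable def BtHom.toIso {X Y : Bitorsor K} (f : BtHom X Y) : X ≅ Y where
  hom := f
  inv := f.inv
  hom_inv_id := BtHom.ext' fun x => (Equiv.ofBijective f.toFun f.bij).symm_apply_apply x
  inv_hom_id := BtHom.ext' fun y => (Equiv.ofBijective f.toFun f.bij).apply_symm_apply y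

/-- The relation `(x ◁ k, y) ∼ (x, k ▷ y)` defining the contracted product `X ×_K Y`. -/
def ctrRel (X Y : Bitorsor K) : X.carrier × Y.carrier → X.carrier × Y.carrier → Prop :=
  fun p q => ∃ k : K, p.1 = X.ract q.1 k ∧ q.2 = Y.act k p.2

theorem ctrRel_equivalence (X Y : Bitorsor K) : Equivalence (ctrRel X Y) where
  refl p := ⟨1, by rw [X.ract_one], by rw [Y.one_act]⟩
  symm := by
    rintro p q ⟨k, h1, h2⟩
    refine ⟨k⁻¹, ?_, ?_⟩
    · rw [h1, ← X.ract_mul, mul_inv_cancel, X.ract_one]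
    · rw [h2, ← Y.mul_act, inv_mul_cancel, Y.one_act]
  trans := by
    rintro p q r ⟨k, h1, h2⟩ ⟨l, h3, h4⟩
    refine ⟨l * k, ?_, ?_⟩
    · rw [h1, h3, ← X.ract_mul]
    · rw [h4, h2, ← Y.mul_act]

/-- The setoid underlying the contracted product. -/
def ctrSetoid (X Y : Bitorsor K) : Setoid (X.carrier × Y.carrier) :=
  ⟨ctrRel X Y, ctrRel_equivalence X Y⟩

theorem ctr_fst_inj {X Y : Bitorsor K} {x x' : X.carrier} {y : Y.carrier}
    (h : Quotient.mk (ctrSetoid X Y) (x, y) = Quotient.mk (ctrSetoid X Y) (x', y)) :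
    x = x' := by
  obtain ⟨d, h1, h2⟩ := Quotient.exact h
  have hd : d = 1 := (Y.left_free_trans y y).unique h2.symm (Y.one_act y)
  rw [hd, X.ract_one] at h1
  exact h1

theorem ctr_snd_inj {X Y : Bitorsor K} {x : X.carrier} {y y' : Y.carrier}
    (h : Quotient.mk (ctrSetoid X Y) (x, y) = Quotient.mk (ctrSetoid X Y) (x, y')) :
    y = y' := by
  obtain ⟨d, h1, h2⟩ := Quotient.exact h
  have hd : d = 1 := (X.right_free_trans x x).unique h1.symm (X.ract_one x)
  rw [hd, Y.one_act] at h2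
  exact h2.symm

/-- The contracted product `X ×_K Y` of two bitorsors. -/
def ctrBt (X Y : Bitorsor K) : Bitorsor K where
  carrier := Quotient (ctrSetoid X Y)
  nonempty := by
    obtain ⟨x⟩ := X.nonempty; obtain ⟨y⟩ := Y.nonempty
    exact ⟨Quotient.mk _ (x, y)⟩
  act := fun k => Quotient.map (fun p => (X.act k p.1, p.2))
    (by rintro p q ⟨c, h1, h2⟩
        exact ⟨c, show X.act k p.1 = X.ract (X.act k q.1) c by rw [h1, X.act_ract], h2⟩)
  ract := fun P k => Quotient.map (fun p => (p.1, Y.ract p.2 k))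
    (by rintro p q ⟨c, h1, h2⟩
        exact ⟨c, h1, show Y.ract q.2 k = Y.act c (Y.ract p.2 k) by rw [h2, Y.act_ract]⟩) P
  one_act := by
    rintro ⟨p⟩
    exact congrArg (Quotient.mk _) (show (X.act 1 p.1, p.2) = p by rw [X.one_act])
  mul_act := by
    rintro k k' ⟨p⟩
    exact congrArg (Quotient.mk _)
      (show (X.act (k * k') p.1, p.2) = (X.act k (X.act k' p.1), p.2) by rw [X.mul_act])
  ract_one := by
    rintro ⟨p⟩
    exact congrArg (Quotient.mk _) (show (p.1, Y.ract p.2 1) = p by rw [Y.ract_one])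
  ract_mul := by
    rintro ⟨p⟩ k k'
    exact congrArg (Quotient.mk _)
      (show (p.1, Y.ract p.2 (k * k')) = (p.1, Y.ract (Y.ract p.2 k) k') by rw [Y.ract_mul])
  act_ract := by
    rintro k ⟨p⟩ k'
    rfl
  left_free_trans := by
    rintro ⟨p⟩ ⟨q⟩
    obtain ⟨c, hc, -⟩ := Y.left_free_trans p.2 q.2
    have hq : Quotient.mk (ctrSetoid X Y) q = Quotient.mk (ctrSetoid X Y) (X.ract q.1 c, p.2) :=
      (Quotient.sound (⟨c, rfl, hc.symm⟩ : ctrRel X Y (X.ract q.1 c, p.2) q)).symm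
    obtain ⟨k, hk, hku⟩ := X.left_free_trans p.1 (X.ract q.1 c)
    refine ⟨k, ?_, ?_⟩
    · have : Quotient.mk (ctrSetoid X Y) (X.act k p.1, p.2)
          = Quotient.mk (ctrSetoid X Y) q := by
        rw [hq]
        exact congrArg (Quotient.mk _)
          (show (X.act k p.1, p.2) = (X.ract q.1 c, p.2) by rw [hk])
      exact this
    · rintro k' hk'
      refine hku k' ?_
      refine ctr_fst_inj (x := X.act k' p.1) (x' := X.ract q.1 c) (y := p.2) ?_
      rw [← hq]
      exact hk'
  right_free_trans := by
    rintro ⟨p⟩ ⟨q⟩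
    obtain ⟨c, hc, -⟩ := X.right_free_trans q.1 p.1
    have hq : Quotient.mk (ctrSetoid X Y) q
        = Quotient.mk (ctrSetoid X Y) (p.1, Y.act c⁻¹ q.2) := by
      refine (Quotient.sound (?_ : ctrRel X Y (p.1, Y.act c⁻¹ q.2) q)).symm
      refine ⟨c, hc.symm, ?_⟩
      show q.2 = Y.act c (Y.act c⁻¹ q.2)
      rw [← Y.mul_act, mul_inv_cancel, Y.one_act]
    obtain ⟨k, hk, hku⟩ := Y.right_free_trans p.2 (Y.act c⁻¹ q.2)
    refine ⟨k, ?_, ?_⟩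
    · have : Quotient.mk (ctrSetoid X Y) (p.1, Y.ract p.2 k)
          = Quotient.mk (ctrSetoid X Y) q := by
        rw [hq]
        exact congrArg (Quotient.mk _)
          (show (p.1, Y.ract p.2 k) = (p.1, Y.act c⁻¹ q.2) by rw [hk])
      exact this
    · rintro k' hk'
      refine hku k' ?_
      refine ctr_snd_inj (x := p.1) (y := Y.ract p.2 k') (y' := Y.act c⁻¹ q.2) ?_
      rw [← hq]
      exact hk'

/-- The trivial bitorsor: `K` acting on itself on both sides. -/
@[reducible] def unitBt : Bitorsor K where
  carrier := K
  nonempty := ⟨1⟩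
  act := (· * ·)
  ract := (· * ·)
  one_act := one_mul
  mul_act := fun k k' x => mul_assoc k k' x
  ract_one := mul_one
  ract_mul := fun x k k' => (mul_assoc x k k').symm
  act_ract := fun k x k' => (mul_assoc k x k').symm
  left_free_trans := fun x y =>
    ⟨y * x⁻¹, by group, fun k hk => by rw [← hk]; group⟩
  right_free_trans := fun x y =>
    ⟨x⁻¹ * y, by group, fun k hk => by rw [← hk]; group⟩

/-- The associator for the contracted product. -/
def assocHom (X Y Z : Bitorsor K) : BtHom (ctrBt (ctrBt X Y) Z) (ctrBt X (ctrBt Y Z)) :=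
  mkHom
    (Quotient.lift
      (fun p : (ctrBt X Y).carrier × Z.carrier =>
        Quotient.lift
          (fun q : X.carrier × Y.carrier =>
            Quotient.mk (ctrSetoid X (ctrBt Y Z))
              (q.1, Quotient.mk (ctrSetoid Y Z) (q.2, p.2)))
          (by rintro q q' ⟨c, h1, h2⟩
              refine Quotient.sound (⟨c, h1, ?_⟩ : ctrRel X (ctrBt Y Z) _ _)
              show Quotient.mk (ctrSetoid Y Z) (q'.2, p.2)
                  = Quotient.mk (ctrSetoid Y Z) (Y.act c q.2, p.2)
              exact congrArg (Quotient.mk _)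
                (show (q'.2, p.2) = (Y.act c q.2, p.2) by rw [h2]))
          p.1)
      (by rintro ⟨P, z⟩ ⟨P', z'⟩ ⟨c, h1, h2⟩
          obtain ⟨q⟩ := P
          obtain ⟨q'⟩ := P'
          obtain ⟨d, hd1, hd2⟩ := Quotient.exact
            (h1.trans (rfl : (ctrBt X Y).ract (Quotient.mk (ctrSetoid X Y) q') c
              = Quotient.mk (ctrSetoid X Y) (q'.1, Y.ract q'.2 c)))
          refine Quotient.sound (⟨d, hd1, ?_⟩ : ctrRel X (ctrBt Y Z)
            (q.1, Quotient.mk (ctrSetoid Y Z) (q.2, z))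
            (q'.1, Quotient.mk (ctrSetoid Y Z) (q'.2, z')))
          show Quotient.mk (ctrSetoid Y Z) (q'.2, z')
              = Quotient.mk (ctrSetoid Y Z) (Y.act d q.2, z)
          rw [← hd2]
          exact (Quotient.sound (⟨c, rfl, h2⟩ : ctrRel Y Z (Y.ract q'.2 c, z) (q'.2, z'))).symm))
    (by rintro k ⟨⟨P, z⟩⟩
        obtain ⟨q⟩ := P
        rfl)
    (by rintro ⟨⟨P, z⟩⟩ k
        obtain ⟨q⟩ := P
        rfl)

/-- The inverse associator for the contracted product. -/
def assocInvHom (X Y Z : Bitorsor K) : BtHom (ctrBt X (ctrBt Y Z)) (ctrBt (ctrBt X Y) Z) :=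
  mkHom
    (Quotient.lift
      (fun p : X.carrier × (ctrBt Y Z).carrier =>
        Quotient.lift
          (fun q : Y.carrier × Z.carrier =>
            Quotient.mk (ctrSetoid (ctrBt X Y) Z)
              (Quotient.mk (ctrSetoid X Y) (p.1, q.1), q.2))
          (by rintro q q' ⟨c, h1, h2⟩
              refine Quotient.sound (⟨c, ?_, h2⟩ : ctrRel (ctrBt X Y) Z _ _)
              show Quotient.mk (ctrSetoid X Y) (p.1, q.1)
                  = Quotient.mk (ctrSetoid X Y) (p.1, Y.ract q'.1 c)
              exact congrArg (Quotient.mk _)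
                (show (p.1, q.1) = (p.1, Y.ract q'.1 c) by rw [h1]))
          p.2)
      (by rintro ⟨x, P⟩ ⟨x', P'⟩ ⟨c, h1, h2⟩
          obtain ⟨q⟩ := P
          obtain ⟨q'⟩ := P'
          obtain ⟨d, hd1, hd2⟩ := (Quotient.exact
            (h2.trans (rfl : (ctrBt Y Z).act c (Quotient.mk (ctrSetoid Y Z) q)
              = Quotient.mk (ctrSetoid Y Z) (Y.act c q.1, q.2))) :
            ctrRel Y Z q' (Y.act c q.1, q.2))
          refine Quotient.sound (⟨d⁻¹, ?_, ?_⟩ : ctrRel (ctrBt X Y) Z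
            (Quotient.mk (ctrSetoid X Y) (x, q.1), q.2)
            (Quotient.mk (ctrSetoid X Y) (x', q'.1), q'.2))
          · have hq : Y.ract q'.1 d⁻¹ = Y.act c q.1 := by
              rw [hd1, ← Y.ract_mul, mul_inv_cancel, Y.ract_one]
            show Quotient.mk (ctrSetoid X Y) (x, q.1)
                = Quotient.mk (ctrSetoid X Y) (x', Y.ract q'.1 d⁻¹)
            rw [hq]
            exact Quotient.sound (⟨c, h1, rfl⟩ : ctrRel X Y (x, q.1) (x', Y.act c q.1))
          · show q'.2 = Z.act d⁻¹ q.2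
            rw [hd2, ← Z.mul_act, inv_mul_cancel, Z.one_act]))
    (by rintro k ⟨⟨x, P⟩⟩
        obtain ⟨q⟩ := P
        rfl)
    (by rintro ⟨⟨x, P⟩⟩ k
        obtain ⟨q⟩ := P
        rfl)

/-- The left unitor for the contracted product. -/
def lUnitHom (X : Bitorsor K) : BtHom (ctrBt unitBt X) X :=
  mkHom
    (Quotient.lift (fun p : K × X.carrier => X.act p.1 p.2)
      (by rintro p q ⟨c, h1, h2⟩
          show X.act p.1 p.2 = X.act q.1 q.2
          rw [h2, h1]
          show X.act (q.1 * c) p.2 = X.act q.1 (X.act c p.2)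
          rw [X.mul_act]))
    (by rintro k ⟨p⟩
        show X.act (k * p.1) p.2 = X.act k (X.act p.1 p.2)
        rw [X.mul_act])
    (by rintro ⟨p⟩ k
        show X.act p.1 (X.ract p.2 k) = X.ract (X.act p.1 p.2) k
        exact X.act_ract _ _ _)

/-- The inverse of the left unitor. -/
def lUnitInvHom (X : Bitorsor K) : BtHom X (ctrBt unitBt X) :=
  mkHom (fun x => Quotient.mk (ctrSetoid unitBt X) (1, x))
    (by intro k x
        show Quotient.mk (ctrSetoid unitBt X) (1, X.act k x)
            = Quotient.mk (ctrSetoid unitBt X) (k * 1, x)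
        refine Quotient.sound (⟨k⁻¹, ?_, ?_⟩ : ctrRel unitBt X (1, X.act k x) (k * 1, x))
        · show (1 : K) = (k * 1) * k⁻¹
          group
        · show x = X.act k⁻¹ (X.act k x)
          rw [← X.mul_act, inv_mul_cancel, X.one_act])
    (by intro x k
        rfl)

/-- The right unitor for the contracted product. -/
def rUnitHom (X : Bitorsor K) : BtHom (ctrBt X unitBt) X :=
  mkHom
    (Quotient.lift (fun p : X.carrier × K => X.ract p.1 p.2)
      (by rintro p q ⟨c, h1, h2⟩
          show X.ract p.1 p.2 = X.ract q.1 q.2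
          rw [h1, h2]
          show X.ract (X.ract q.1 c) p.2 = X.ract q.1 (c * p.2)
          rw [X.ract_mul]))
    (by rintro k ⟨p⟩
        show X.ract (X.act k p.1) p.2 = X.act k (X.ract p.1 p.2)
        exact (X.act_ract _ _ _).symm)
    (by rintro ⟨p⟩ k
        show X.ract p.1 (p.2 * k) = X.ract (X.ract p.1 p.2) k
        rw [X.ract_mul])

/-- The inverse of the right unitor. -/
def rUnitInvHom (X : Bitorsor K) : BtHom X (ctrBt X unitBt) :=
  mkHom (fun x => Quotient.mk (ctrSetoid X unitBt) (x, 1))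
    (by intro k x
        rfl)
    (by intro x k
        show Quotient.mk (ctrSetoid X unitBt) (X.ract x k, 1)
            = Quotient.mk (ctrSetoid X unitBt) (x, 1 * k)
        refine Quotient.sound (⟨k, rfl, ?_⟩ : ctrRel X unitBt (X.ract x k, 1) (x, 1 * k))
        show (1 * k : K) = k * 1
        group)

instance : MonoidalCategory (Bitorsor K) where
  tensorObj := ctrBt
  tensorUnit := unitBt
  whiskerLeft := fun X {Y Z} f => mkHom
    (Quotient.map (fun p => (p.1, f.toFun p.2))
      (by rintro p q ⟨c, h1, h2⟩
          exact ⟨c, h1, show f.toFun q.2 = Z.act c (f.toFun p.2) by rw [h2, f.map_act]⟩))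
    (by rintro k ⟨p⟩; rfl)
    (by rintro ⟨p⟩ k
        exact congrArg (Quotient.mk _)
          (show (p.1, f.toFun (Y.ract p.2 k)) = (p.1, Z.ract (f.toFun p.2) k) by
            rw [f.map_ract]))
  whiskerRight := fun {X Y} f Z => mkHom
    (Quotient.map (fun p => (f.toFun p.1, p.2))
      (by rintro p q ⟨c, h1, h2⟩
          exact ⟨c, show f.toFun p.1 = Y.ract (f.toFun q.1) c by rw [h1, f.map_ract], h2⟩))
    (by rintro k ⟨p⟩
        exact congrArg (Quotient.mk _)
          (show (f.toFun (X.act k p.1), p.2) = (Y.act k (f.toFun p.1), p.2) by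
            rw [f.map_act]))
    (by rintro ⟨p⟩ k; rfl)
  associator X Y Z :=
    ⟨assocHom X Y Z, assocInvHom X Y Z,
      BtHom.ext' (by rintro ⟨⟨P, z⟩⟩; obtain ⟨q⟩ := P; rfl),
      BtHom.ext' (by rintro ⟨⟨x, P⟩⟩; obtain ⟨q⟩ := P; rfl)⟩
  leftUnitor X :=
    ⟨lUnitHom X, lUnitInvHom X,
      BtHom.ext' (by
        rintro ⟨p⟩
        refine (Quotient.sound (⟨p.1⁻¹, ?_, ?_⟩ :
          ctrRel unitBt X (1, X.act p.1 p.2) p)).trans ?_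
        · show (1 : K) = p.1 * p.1⁻¹
          group
        · show p.2 = X.act p.1⁻¹ (X.act p.1 p.2)
          rw [← X.mul_act, inv_mul_cancel, X.one_act]
        · rfl),
      BtHom.ext' (fun x => X.one_act x)⟩
  rightUnitor X :=
    ⟨rUnitHom X, rUnitInvHom X,
      BtHom.ext' (by
        rintro ⟨p⟩
        refine (Quotient.sound (⟨p.2, rfl, ?_⟩ :
          ctrRel X unitBt (X.ract p.1 p.2, 1) p)).trans ?_
        · show p.2 = p.2 * 1
          group
        · rfl),
      BtHom.ext' (fun x => X.ract_one x)⟩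
  tensorHom_def := by intros; rfl
  id_tensorHom_id := by
    intro X Y
    apply BtHom.ext'
    rintro ⟨p⟩
    rfl
  tensorHom_comp_tensorHom := by
    intros
    apply BtHom.ext'
    rintro ⟨p⟩
    rfl
  whiskerLeft_id := by
    intro X Y
    apply BtHom.ext'
    rintro ⟨p⟩
    rfl
  id_whiskerRight := by
    intro X Y
    apply BtHom.ext'
    rintro ⟨p⟩
    rfl
  associator_naturality := by
    intro X₁ X₂ X₃ Y₁ Y₂ Y₃ f₁ f₂ f₃
    apply BtHom.ext'
    rintro ⟨⟨P, z⟩⟩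
    obtain ⟨q⟩ := P
    rfl
  leftUnitor_naturality := by
    intro X Y f
    apply BtHom.ext'
    rintro ⟨p⟩
    exact (f.map_act p.1 p.2).symm
  rightUnitor_naturality := by
    intro X Y f
    apply BtHom.ext'
    rintro ⟨p⟩
    exact (f.map_ract p.1 p.2).symm
  pentagon := by
    intro W X Y Z
    apply BtHom.ext'
    rintro ⟨⟨P, z⟩⟩
    obtain ⟨⟨Q, y⟩⟩ := P
    obtain ⟨q⟩ := Q
    rfl
  triangle := by
    intro X Y
    apply BtHom.ext'
    rintro ⟨⟨P, y⟩⟩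
    obtain ⟨p⟩ := P
    exact (Quotient.sound (⟨p.2, rfl, rfl⟩ :
      ctrRel X Y (X.ract p.1 p.2, y) (p.1, Y.act p.2 y))).symm

/-- An extension of a group `G` by a group `K`: a group `E` with a surjection `π : E → G`
and an identification of `K` with the kernel of `π`. -/
structure GroupExtension (G K : Type u) [Group G] [Group K] : Type (u + 1) where
  E : Type u
  [grp : Group E]
  π : E →* G
  surj : Function.Surjective π
  ι : K →* E
  inj : Function.Injective ι
  ker_eq : ∀ e : E, π e = 1 ↔ e ∈ Set.range ι

attribute [instance] GroupExtension.grp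

variable {G : Type u} [Group G]

/-- Isomorphism of extensions: a group isomorphism commuting with the projections to `G`
and restricting to the identity on `K`. -/
def extRel (e₁ e₂ : GroupExtension G K) : Prop :=
  ∃ f : e₁.E ≃* e₂.E, (∀ x, e₂.π (f x) = e₁.π x) ∧ ∀ k, f (e₁.ι k) = e₂.ι k

/-- The fiber of an extension over `g ∈ G`, as a `K`-bitorsor. -/
def fibBt (e : GroupExtension G K) (g : G) : Bitorsor K where
  carrier := { x : e.E // e.π x = g }
  nonempty := by
    obtain ⟨x, hx⟩ := e.surj g
    exact ⟨⟨x, hx⟩⟩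
  act k x := ⟨e.ι k * x.1, by
    rw [map_mul, (e.ker_eq _).mpr ⟨k, rfl⟩, x.2, one_mul]⟩
  ract x k := ⟨x.1 * e.ι k, by
    rw [map_mul, (e.ker_eq _).mpr ⟨k, rfl⟩, x.2, mul_one]⟩
  one_act x := Subtype.ext (by show e.ι 1 * x.1 = x.1; simp)
  mul_act k k' x := Subtype.ext (by
    show e.ι (k * k') * x.1 = e.ι k * (e.ι k' * x.1)
    simp [mul_assoc])
  ract_one x := Subtype.ext (by show x.1 * e.ι 1 = x.1; simp)
  ract_mul x k k' := Subtype.ext (by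
    show x.1 * e.ι (k * k') = (x.1 * e.ι k) * e.ι k'
    simp [mul_assoc])
  act_ract k x k' := Subtype.ext (by
    show e.ι k * (x.1 * e.ι k') = (e.ι k * x.1) * e.ι k'
    simp [mul_assoc])
  left_free_trans x y := by
    have h : e.π (y.1 * x.1⁻¹) = 1 := by rw [map_mul, map_inv, x.2, y.2, mul_inv_cancel]
    obtain ⟨k, hk⟩ := (e.ker_eq _).mp h
    refine ⟨k, Subtype.ext (by show e.ι k * x.1 = y.1; rw [hk]; group), ?_⟩
    intro k' hk'
    apply e.inj
    have h' : e.ι k' * x.1 = y.1 := congrArg Subtype.val hk'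
    rw [hk, ← h']
    group
  right_free_trans x y := by
    have h : e.π (x.1⁻¹ * y.1) = 1 := by rw [map_mul, map_inv, x.2, y.2, inv_mul_cancel]
    obtain ⟨k, hk⟩ := (e.ker_eq _).mp h
    refine ⟨k, Subtype.ext (by show x.1 * e.ι k = y.1; rw [hk]; group), ?_⟩
    intro k' hk'
    apply e.inj
    have h' : x.1 * e.ι k' = y.1 := congrArg Subtype.val hk'
    rw [hk, ← h']
    group

/-- The fiber functor of an extension: `g ↦ ∂⁻¹(g)`. -/
def fibF (e : GroupExtension G K) : Discrete G ⥤ Bitorsor K where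
  obj g := fibBt e g.as
  map {a b} f := mkHom (fun x => ⟨x.1, (Discrete.eq_of_hom f) ▸ x.2⟩)
    (fun k x => Subtype.ext rfl) (fun x k => Subtype.ext rfl)
  map_id := by
    intro a
    exact BtHom.ext' fun x => rfl
  map_comp := by
    intro a b c f g
    exact BtHom.ext' fun x => rfl

/-- The monoidal structure on the fiber functor, given by multiplication. -/
noncomputable def fibCore (e : GroupExtension G K) : (fibF e).CoreMonoidal where
  εIso := BtHom.toIso <| mkHom (X := unitBt) (Y := fibBt e (1 : G))
    (fun (k : K) => (⟨e.ι k, (e.ker_eq _).mpr ⟨k, rfl⟩⟩ : (fibBt e (1 : G)).carrier))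
    (fun k k' => Subtype.ext (map_mul e.ι k k'))
    (fun k k' => Subtype.ext (map_mul e.ι k k'))
  μIso a b := BtHom.toIso <| mkHom
    (X := ctrBt (fibBt e a.as) (fibBt e b.as)) (Y := fibBt e (a.as * b.as))
    (Quotient.lift (fun p : (fibBt e a.as).carrier × (fibBt e b.as).carrier =>
        (⟨p.1.1 * p.2.1, by rw [map_mul, p.1.2, p.2.2]⟩ : (fibBt e (a.as * b.as)).carrier))
      (by rintro p q ⟨c, h1, h2⟩
          have h1' : p.1.1 = q.1.1 * e.ι c := congrArg Subtype.val h1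
          have h2' : q.2.1 = e.ι c * p.2.1 := congrArg Subtype.val h2
          apply Subtype.ext
          show p.1.1 * p.2.1 = q.1.1 * q.2.1
          rw [h1', h2', mul_assoc]))
    (by rintro k ⟨p⟩
        exact Subtype.ext (mul_assoc _ _ _))
    (by rintro ⟨p⟩ k
        exact Subtype.ext (mul_assoc _ _ _).symm)
  μIso_hom_natural_left := by
    rintro a a' f b
    apply BtHom.ext'
    rintro ⟨p⟩
    rfl
  μIso_hom_natural_right := by
    rintro a a' b f
    apply BtHom.ext'
    rintro ⟨p⟩
    rfl
  associativity := by
    intro a b c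
    apply BtHom.ext'
    rintro ⟨⟨P, z⟩⟩
    obtain ⟨q⟩ := P
    exact Subtype.ext (mul_assoc _ _ _)
  left_unitality := by
    intro a
    apply BtHom.ext'
    rintro ⟨p⟩
    rfl
  right_unitality := by
    intro a
    apply BtHom.ext'
    rintro ⟨p⟩
    rfl

/-- A bundled monoidal functor from the discrete monoidal category `G` to the 2-group of
`K`-bitorsors. -/
structure MonFunctor (G K : Type u) [Group G] [Group K] : Type (u + 1) where
  F : Discrete G ⥤ Bitorsor K
  mon : F.Monoidal

/-- Monoidal natural isomorphism of bundled monoidal functors. -/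
def monRel (F₁ F₂ : MonFunctor G K) : Prop :=
  ∃ i : F₁.F ≅ F₂.F,
    letI : F₁.F.LaxMonoidal := F₁.mon.toLaxMonoidal
    letI : F₂.F.LaxMonoidal := F₂.mon.toLaxMonoidal
    NatTrans.IsMonoidal i.hom

/-- The bundled monoidal fiber functor of an extension. -/
noncomputable def fiberMonFunctor (e : GroupExtension G K) : MonFunctor G K :=
  ⟨fibF e, (fibCore e).toMonoidal⟩

/-! A monoidal functor `F` from `G` to `K`-bitorsors yields the group `Σ g, F g`, multiplied
through the structure maps `F g ×_K F h → F (g h)`: associativity and unitality of `F` are the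
group axioms, `ε` embeds `K` as the fiber over `1`, and the left and right `K`-actions on a fiber
become multiplication by that copy of `K`. Its fiber functor is `F` again, and the total space of
the fiber functor of an extension `E` is `E` itself. -/

def Quot.equivOfRoundTrips {α β : Sort*} {r : α → α → Prop} {s : β → β → Prop}
    (f : α → β) (g : β → α) (hf : ∀ a a', r a a' → s (f a) (f a'))
    (hg : ∀ b b', s b b' → r (g b) (g b')) (hgf : ∀ a, r (g (f a)) a)
    (hfg : ∀ b, s (f (g b)) b) : Quot r ≃ Quot s where
  toFun := Quot.lift (fun a => Quot.mk s (f a)) fun a a' h => Quot.sound (hf a a' h)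
  invFun := Quot.lift (fun b => Quot.mk r (g b)) fun b b' h => Quot.sound (hg b b' h)
  left_inv := Quot.ind fun a => Quot.sound (hgf a)
  right_inv := Quot.ind fun b => Quot.sound (hfg b)

section TotalSpace

open Functor.LaxMonoidal MonoidalCategory

def TotalSpace {α : Type u} (F : Discrete α ⥤ Bitorsor K) : Type u :=
  (a : α) × (F.obj ⟨a⟩).carrier

theorem TotalSpace.mk_eq_of_map_eq {α : Type u} (F : Discrete α ⥤ Bitorsor K) {a b : Discrete α}
    (f : a ⟶ b) {x : (F.obj a).carrier} {y : (F.obj b).carrier} (hxy : (F.map f).toFun x = y) :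
    (⟨a.as, x⟩ : TotalSpace F) = ⟨b.as, y⟩ := by
  obtain ⟨g⟩ := a
  obtain ⟨h⟩ := b
  obtain rfl : g = h := Discrete.eq_of_hom f
  rw [← hxy, Subsingleton.elim f (𝟙 _), F.map_id]
  rfl

variable (F : Discrete G ⥤ Bitorsor K) [F.LaxMonoidal]

def fiberMul {g h : G} (x : (F.obj ⟨g⟩).carrier) (y : (F.obj ⟨h⟩).carrier) :
    (F.obj ⟨g * h⟩).carrier :=
  (μ F ⟨g⟩ ⟨h⟩).toFun (Quotient.mk (ctrSetoid (F.obj ⟨g⟩) (F.obj ⟨h⟩)) (x, y))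

theorem exists_fiberMul_eq {g h : G} (y : (F.obj ⟨h⟩).carrier) (z : (F.obj ⟨g * h⟩).carrier) :
    ∃ x : (F.obj ⟨g⟩).carrier, fiberMul F x y = z :=
  (bijective_of_equivariant (fun x => fiberMul F x y)
    (fun k x => (μ F ⟨g⟩ ⟨h⟩).map_act k (Quotient.mk _ (x, y)))).2 z

instance : Mul (TotalSpace F) := ⟨fun p q => ⟨p.1 * q.1, fiberMul F p.2 q.2⟩⟩

instance : One (TotalSpace F) := ⟨⟨1, (ε F).toFun 1⟩⟩

theorem TotalSpace.mul_assoc (p q r : TotalSpace F) : p * q * r = p * (q * r) := by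
  obtain ⟨g, x⟩ := p
  obtain ⟨h, y⟩ := q
  obtain ⟨n, z⟩ := r
  have hμ : (F.map (α_ _ _ _).hom).toFun (fiberMul F (fiberMul F x y) z)
      = fiberMul F x (fiberMul F y z) :=
    congrArg (fun φ => φ.toFun (Quotient.mk _ (Quotient.mk _ (x, y), z)))
      (associativity F ⟨g⟩ ⟨h⟩ ⟨n⟩)
  exact TotalSpace.mk_eq_of_map_eq F _ hμ

theorem TotalSpace.ε_mul_mk (k : K) {g : G} (x : (F.obj ⟨g⟩).carrier) :
    (⟨1, (ε F).toFun k⟩ * ⟨g, x⟩ : TotalSpace F) = ⟨g, (F.obj ⟨g⟩).act k x⟩ := by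
  have hε : (F.map (λ_ _).hom).toFun (fiberMul F ((ε F).toFun k) x) = (F.obj ⟨g⟩).act k x :=
    congrArg (fun φ => φ.toFun (Quotient.mk _ (k, x))) (left_unitality F ⟨g⟩).symm
  exact TotalSpace.mk_eq_of_map_eq F _ hε

theorem TotalSpace.mk_mul_ε {g : G} (x : (F.obj ⟨g⟩).carrier) (k : K) :
    (⟨g, x⟩ * ⟨1, (ε F).toFun k⟩ : TotalSpace F) = ⟨g, (F.obj ⟨g⟩).ract x k⟩ := by
  have hε : (F.map (ρ_ _).hom).toFun (fiberMul F x ((ε F).toFun k)) = (F.obj ⟨g⟩).ract x k :=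
    congrArg (fun φ => φ.toFun (Quotient.mk _ (x, k))) (right_unitality F ⟨g⟩).symm
  exact TotalSpace.mk_eq_of_map_eq F _ hε

theorem TotalSpace.exists_mul_eq_one (p : TotalSpace F) : ∃ q : TotalSpace F, q * p = 1 := by
  obtain ⟨g, x⟩ := p
  let f : (⟨1⟩ : Discrete G) ⟶ ⟨g⁻¹ * g⟩ := eqToHom (congrArg Discrete.mk (inv_mul_cancel g).symm)
  obtain ⟨y, hy⟩ := exists_fiberMul_eq F x ((F.map f).toFun ((ε F).toFun 1))
  exact ⟨⟨g⁻¹, y⟩, (TotalSpace.mk_eq_of_map_eq F f hy.symm).symm⟩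

noncomputable instance : Inv (TotalSpace F) :=
  ⟨fun p => Classical.choose (TotalSpace.exists_mul_eq_one F p)⟩

noncomputable instance : Group (TotalSpace F) :=
  Group.ofLeftAxioms (TotalSpace.mul_assoc F)
    (fun ⟨g, x⟩ => (TotalSpace.ε_mul_mk F 1 x).trans (by rw [(F.obj ⟨g⟩).one_act]))
    (fun p => Classical.choose_spec (TotalSpace.exists_mul_eq_one F p))

def TotalSpace.projHom : TotalSpace F →* G where
  toFun := Sigma.fst
  map_one' := rfl
  map_mul' _ _ := rfl

def TotalSpace.εHom : K →* TotalSpace F where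
  toFun k := ⟨1, (ε F).toFun k⟩
  map_one' := rfl
  map_mul' k k' :=
    (congrArg (fun t => (⟨1, t⟩ : TotalSpace F)) ((ε F).map_act k k')).trans
      (TotalSpace.ε_mul_mk F k _).symm

theorem TotalSpace.εHom_injective : Function.Injective (TotalSpace.εHom F) :=
  fun _ _ h => (ε F).bij.1 (eq_of_heq (Sigma.mk.inj_iff.mp h).2)

theorem TotalSpace.projHom_eq_one_iff (p : TotalSpace F) :
    TotalSpace.projHom F p = 1 ↔ p ∈ Set.range (TotalSpace.εHom F) := by
  obtain ⟨g, x⟩ := p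
  constructor
  · rintro (rfl : g = 1)
    obtain ⟨k, rfl⟩ := (ε F).bij.2 x
    exact ⟨k, rfl⟩
  · rintro ⟨k, hk⟩
    exact (congrArg Sigma.fst hk).symm

noncomputable def totalExtension : GroupExtension G K where
  E := TotalSpace F
  π := TotalSpace.projHom F
  surj g := ⟨⟨g, Classical.choice (F.obj ⟨g⟩).nonempty⟩, rfl⟩
  ι := TotalSpace.εHom F
  inj := TotalSpace.εHom_injective F
  ker_eq := TotalSpace.projHom_eq_one_iff F

end TotalSpace

noncomputable def MonFunctor.toGroupExtension (M : MonFunctor G K) : GroupExtension G K :=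
  letI := M.mon.toLaxMonoidal
  totalExtension M.F

theorem extRel_toGroupExtension_fiberMonFunctor (e : GroupExtension G K) :
    extRel (fiberMonFunctor e).toGroupExtension e :=
  ⟨{ Equiv.sigmaFiberEquiv e.π with map_mul' := fun _ _ => rfl }, fun p => p.2.2, fun _ => rfl⟩

theorem monRel_fiberMonFunctor_toGroupExtension (M : MonFunctor G K) :
    monRel (fiberMonFunctor M.toGroupExtension) M := by
  let _ := M.mon.toLaxMonoidal
  let _ : (fibF M.toGroupExtension).LaxMonoidal :=
    (fiberMonFunctor M.toGroupExtension).mon.toLaxMonoidal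
  let incl (a : Discrete G) : M.F.obj a ⟶ (fibF M.toGroupExtension).obj a :=
    mkHom (fun x => ⟨⟨a.as, x⟩, rfl⟩)
      (fun k x => Subtype.ext (TotalSpace.ε_mul_mk M.F k x).symm)
      (fun x k => Subtype.ext (TotalSpace.mk_mul_ε M.F x k).symm)
  let J : M.F ≅ fibF M.toGroupExtension := NatIso.ofComponents (fun a => (incl a).toIso)
    fun f => BtHom.ext' fun x => Subtype.ext (TotalSpace.mk_eq_of_map_eq M.F f rfl).symm
  have : NatTrans.IsMonoidal J.hom :=
    { unit := BtHom.ext' fun _ => rfl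
      tensor := fun _ _ => BtHom.ext' fun p => Quotient.inductionOn p fun _ => rfl }
  exact ⟨J.symm, inferInstanceAs (NatTrans.IsMonoidal J.inv)⟩

theorem monRel_fiberMonFunctor_of_extRel {e₁ e₂ : GroupExtension G K} (h : extRel e₁ e₂) :
    monRel (fiberMonFunctor e₁) (fiberMonFunctor e₂) := by
  obtain ⟨f, hπ, hι⟩ := h
  let _ := (fiberMonFunctor e₁).mon.toLaxMonoidal
  let _ := (fiberMonFunctor e₂).mon.toLaxMonoidal
  let fiberMap (g : G) : fibBt e₁ g ⟶ fibBt e₂ g :=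
    mkHom (fun x => ⟨f x.1, by rw [hπ, x.2]⟩)
      (fun k x => Subtype.ext ((map_mul f _ _).trans (congrArg (· * f x.1) (hι k))))
      (fun x k => Subtype.ext ((map_mul f _ _).trans (congrArg (f x.1 * ·) (hι k))))
  refine ⟨NatIso.ofComponents (fun a => (fiberMap a.as).toIso)
    fun _ => BtHom.ext' fun _ => rfl, ?_⟩
  exact
    { unit := BtHom.ext' fun k => Subtype.ext (hι k)
      tensor := fun _ _ => BtHom.ext' fun p =>
        Quotient.inductionOn p fun _ => Subtype.ext (map_mul f _ _) }

theorem extRel_toGroupExtension_of_monRel {M₁ M₂ : MonFunctor G K} (h : monRel M₁ M₂) :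
    extRel M₁.toGroupExtension M₂.toGroupExtension := by
  obtain ⟨i, hi⟩ := h
  let _ := M₁.mon.toLaxMonoidal
  let _ := M₂.mon.toLaxMonoidal
  let fiberIso (g : G) : (M₁.F.obj ⟨g⟩).carrier ≃ (M₂.F.obj ⟨g⟩).carrier :=
    { toFun := (i.hom.app ⟨g⟩).toFun
      invFun := (i.inv.app ⟨g⟩).toFun
      left_inv := fun x => congrArg (fun τ : M₁.F ⟶ M₁.F => (τ.app ⟨g⟩).toFun x) i.hom_inv_id
      right_inv := fun x => congrArg (fun τ : M₂.F ⟶ M₂.F => (τ.app ⟨g⟩).toFun x) i.inv_hom_id }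
  refine ⟨{ Equiv.sigmaCongrRight fiberIso with map_mul' := ?_ }, fun _ => rfl, fun k => ?_⟩
  · rintro ⟨g, x⟩ ⟨h, y⟩
    exact congrArg (fun t => (⟨g * h, t⟩ : TotalSpace M₂.F))
      (congrArg (fun φ => φ.toFun (Quotient.mk _ (x, y))) (hi.tensor ⟨g⟩ ⟨h⟩))
  · exact congrArg (fun t => (⟨1, t⟩ : TotalSpace M₂.F))
      (congrArg (fun φ => φ.toFun k) hi.unit)

/-- **Statement 6 (Grothendieck).** Isomorphism classes of extensions of `G` by `K` are in
bijection with isomorphism classes of monoidal functors from the discrete monoidal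
category `G` to the 2-group of `K`-bitorsors; the bijection sends an extension
`∂ : E → G` to the functor `g ↦ ∂⁻¹(g)`. -/
theorem extensions_equiv_monoidal_functors (G K : Type u) [Group G] [Group K] :
    ∃ e : Quot (extRel (G := G) (K := K)) ≃ Quot (monRel (G := G) (K := K)),
      ∀ ext : GroupExtension G K,
        e (Quot.mk _ ext) = Quot.mk _ (fiberMonFunctor ext) :=
  ⟨Quot.equivOfRoundTrips fiberMonFunctor MonFunctor.toGroupExtension
    (fun _ _ => monRel_fiberMonFunctor_of_extRel) (fun _ _ => extRel_toGroupExtension_of_monRel)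
    extRel_toGroupExtension_fiberMonFunctor monRel_fiberMonFunctor_toGroupExtension,
    fun _ => rfl⟩

end BraidedExt
end

section
/- Let A and H be abelian groups and (h, c) an abelian 3-cocycle on A with values in H. If the triples (φ, ψ, k) and (φ', ψ', k') are both admissible relative to (h, c), then so is their product (φ∘φ', ψ∘ψ', k∘(φ'×φ') + ψ∘k'). -/
/-! The differential `d2` is additive and natural with respect to additive maps on either side.
Hence `d2` of the composite cochain is `d2 k` pulled back along `φ'` plus `ψ` applied to `d2 k'`,
and the two coboundary conditions add up telescopically; the braiding condition for the composite
is likewise the braiding condition for `k` at `(φ' a, φ' b)` plus `ψ` applied to that for `k'`. -/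

namespace BraidedExt

variable {A H : Type*} [AddCommGroup A] [AddCommGroup H]

/-- The differential of a 1-cochain `η : A → H`. -/
def d1 (η : A → H) : A → A → H := fun a b => η b - η (a + b) + η a

/-- The differential of a 2-cochain `k : A² → H`. -/
def d2 (k : A → A → H) : A → A → A → H :=
  fun a b c => k b c - k (a + b) c + k a (b + c) - k a b

/-- A 1-cochain is normalized if it vanishes at 0. -/
def Normalized1 (η : A → H) : Prop := η 0 = 0

/-- A 2-cochain is normalized if it vanishes whenever any argument is 0. -/
def Normalized2 (k : A → A → H) : Prop := ∀ a : A, k a 0 = 0 ∧ k 0 a = 0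

/-- A 3-cochain is normalized if it vanishes whenever any argument is 0. -/
def Normalized3 (h : A → A → A → H) : Prop :=
  ∀ a b : A, h a b 0 = 0 ∧ h a 0 b = 0 ∧ h 0 a b = 0

/-- `h : A³ → H` is a normalized 3-cocycle. -/
def IsCocycle3 (h : A → A → A → H) : Prop :=
  Normalized3 h ∧
    ∀ a₁ a₂ a₃ a₄ : A,
      h a₂ a₃ a₄ - h (a₁ + a₂) a₃ a₄ + h a₁ (a₂ + a₃) a₄ - h a₁ a₂ (a₃ + a₄) + h a₁ a₂ a₃ = 0

/-- `(h, c)` is an abelian 3-cocycle on `A` with values in `H`. -/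
def IsAbelianCocycle (h : A → A → A → H) (c : A → A → H) : Prop :=
  IsCocycle3 h ∧
    (∀ a₁ a₂ b : A,
      c (a₁ + a₂) b = c a₁ b + c a₂ b + h a₁ a₂ b - h a₁ b a₂ + h b a₁ a₂) ∧
    (∀ a b₁ b₂ : A,
      c a (b₁ + b₂) = c a b₁ + c a b₂ - h a b₁ b₂ + h b₁ a b₂ - h b₁ b₂ a)

/-- The triple `(φ, ψ, k)` is admissible relative to the abelian 3-cocycle `(h, c)`. -/
def Admissible (h : A → A → A → H) (c : A → A → H)
    (φ : A → A) (ψ : H → H) (k : A → A → H) : Prop :=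
  Normalized2 k ∧
    (∀ a b c' : A, d2 k a b c' = ψ (h a b c') - h (φ a) (φ b) (φ c')) ∧
    (∀ a b : A, ψ (c a b) + k a b = k b a + c (φ a) (φ b))

theorem d2_add (k k' : A → A → H) (a b c : A) :
    d2 (fun x y => k x y + k' x y) a b c = d2 k a b c + d2 k' a b c := by
  simp only [d2]
  abel

theorem d2_comp_addHom {B F : Type*} [AddCommGroup B] [FunLike F A B] [AddHomClass F A B]
    (k : B → B → H) (f : F) (a b c : A) :
    d2 (fun x y => k (f x) (f y)) a b c = d2 k (f a) (f b) (f c) := by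
  simp only [d2, map_add]

theorem map_d2 {K G : Type*} [AddCommGroup K] [FunLike G H K] [AddMonoidHomClass G H K]
    (g : G) (k : A → A → H) (a b c : A) :
    g (d2 k a b c) = d2 (fun x y => g (k x y)) a b c := by
  simp only [d2, map_add, map_sub]

theorem Normalized2.comp_add {B K F G : Type*} [AddCommGroup B] [AddCommGroup K]
    [FunLike F A B] [AddMonoidHomClass F A B] [FunLike G H K] [AddMonoidHomClass G H K]
    {k : B → B → K} {k' : A → A → H} (hk : Normalized2 k) (hk' : Normalized2 k')
    (f : F) (g : G) : Normalized2 (fun a b => k (f a) (f b) + g (k' a b)) := fun a =>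
  ⟨by simp [(hk _).1, (hk' a).1], by simp [(hk _).2, (hk' a).2]⟩

theorem admissible_comp_general {A H : Type*} [AddCommGroup A] [AddCommGroup H]
    (h : A → A → A → H) (c : A → A → H)
    (φ φ' : A ≃+ A) (ψ ψ' : H ≃+ H) (k k' : A → A → H)
    (h₁ : Admissible h c φ ψ k) (h₂ : Admissible h c φ' ψ' k') :
    Admissible h c (fun a => φ (φ' a)) (fun x => ψ (ψ' x))
      (fun a b => k (φ' a) (φ' b) + ψ (k' a b)) := by
  obtain ⟨hn₁, hd₁, hc₁⟩ := h₁
  obtain ⟨hn₂, hd₂, hc₂⟩ := h₂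
  refine ⟨hn₁.comp_add hn₂ φ' ψ, fun a b c' => ?_, fun a b => ?_⟩
  · have hψ := congrArg ψ (hd₂ a b c')
    rw [map_sub] at hψ
    rw [d2_add, d2_comp_addHom k φ', ← map_d2 ψ, hd₁, hψ]
    abel
  · have hψ := congrArg ψ (hc₂ a b)
    rw [map_add, map_add] at hψ
    beta_reduce
    linear_combination (norm := abel) hψ + hc₁ (φ' a) (φ' b)

/-- If the triples `(φ, ψ, k)` and `(φ', ψ', k')` are both admissible
relative to the abelian 3-cocycle `(h, c)`, then so is their product
`(φ∘φ', ψ∘ψ', k∘(φ'×φ') + ψ∘k')`. -/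
theorem admissible_comp {A H : Type*} [AddCommGroup A] [AddCommGroup H]
    (h : A → A → A → H) (c : A → A → H) (habc : IsAbelianCocycle h c)
    (φ φ' : A ≃+ A) (ψ ψ' : H ≃+ H) (k k' : A → A → H)
    (h₁ : Admissible h c φ ψ k) (h₂ : Admissible h c φ' ψ' k') :
    Admissible h c (fun a => φ (φ' a)) (fun x => ψ (ψ' x))
      (fun a b => k (φ' a) (φ' b) + ψ (k' a b)) :=
  admissible_comp_general h c φ φ' ψ ψ' k k' h₁ h₂

end BraidedExt
end

section
/- Let A and H be abelian groups and (h, c) an abelian 3-cocycle on A with values in H. If the triple (φ, ψ, k) is admissible relative to (h, c), then so is the triple (φ⁻¹, ψ⁻¹, −ψ⁻¹∘k∘(φ⁻¹×φ⁻¹)), and the product of (φ, ψ, k) with this triple (in either order) is (id_A, id_H, 0). -/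
namespace BraidedExt

variable {A H : Type*} [AddCommGroup A] [AddCommGroup H]

/-- The product of triples `(φ, ψ, k) ∘ (φ', ψ', k') := (φ∘φ', ψ∘ψ', k∘(φ'×φ') + ψ∘k')`,
encoded on the 2-cochain components. -/
def tripleProdK {A H : Type*} [AddCommGroup A] [AddCommGroup H]
    (φ' : A → A) (ψ : H → H) (k k' : A → A → H) : A → A → H :=
  fun a b => k (φ' a) (φ' b) + ψ (k' a b)

def inverseCochain (φ : A ≃+ A) (ψ : H ≃+ H) (k : A → A → H) : A → A → H :=
  fun a b => -ψ.symm (k (φ.symm a) (φ.symm b))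

section

variable {B K F G : Type*} [AddCommGroup B] [AddCommGroup K]
  [FunLike F A B] [AddMonoidHomClass F A B] [FunLike G K H] [AddMonoidHomClass G K H]

theorem d2_comp (φ : F) (ψ : G) (k : B → B → K) (a b c : A) :
    d2 (fun x y => ψ (k (φ x) (φ y))) a b c = ψ (d2 k (φ a) (φ b) (φ c)) := by
  simp only [d2, map_add, map_sub]

end

theorem d2_neg (k : A → A → H) (a b c : A) : d2 (fun x y => -k x y) a b c = -d2 k a b c := by
  simp only [d2]
  abel

theorem Normalized2.inverseCochain {k : A → A → H} (hk : Normalized2 k) (φ : A ≃+ A)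
    (ψ : H ≃+ H) : Normalized2 (inverseCochain φ ψ k) := fun a => by
  simp [BraidedExt.inverseCochain, (hk _).1, (hk _).2]

/-- Each condition on the inverse triple is `ψ⁻¹` applied to the corresponding condition on
`(φ, ψ, k)` at the arguments `φ⁻¹ a, φ⁻¹ b, …`. -/
theorem Admissible.inv {h : A → A → A → H} {c : A → A → H} {φ : A ≃+ A} {ψ : H ≃+ H}
    {k : A → A → H} (hk : Admissible h c φ ψ k) :
    Admissible h c φ.symm ψ.symm (inverseCochain φ ψ k) := by
  obtain ⟨hnorm, hd2, hc⟩ := hk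
  refine ⟨hnorm.inverseCochain φ ψ, fun a b c' => ?_, fun a b => ?_⟩
  · have hd2' := congrArg ψ.symm (hd2 (φ.symm a) (φ.symm b) (φ.symm c'))
    simp only [map_sub, ψ.symm_apply_apply, φ.apply_symm_apply] at hd2'
    unfold BraidedExt.inverseCochain
    rw [d2_neg, d2_comp φ.symm ψ.symm, hd2']
    abel
  · have hc' := congrArg ψ.symm (hc (φ.symm a) (φ.symm b))
    simp only [map_add, ψ.symm_apply_apply, φ.apply_symm_apply] at hc'
    unfold BraidedExt.inverseCochain
    linear_combination (norm := abel) -hc'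

theorem tripleProdK_inverseCochain_right (φ : A ≃+ A) (ψ : H ≃+ H) (k : A → A → H) :
    tripleProdK φ.symm ψ k (inverseCochain φ ψ k) = 0 := by
  funext a b
  simp [tripleProdK, BraidedExt.inverseCochain]

theorem tripleProdK_inverseCochain_left (φ : A ≃+ A) (ψ : H ≃+ H) (k : A → A → H) :
    tripleProdK φ ψ.symm (inverseCochain φ ψ k) k = 0 := by
  funext a b
  simp [tripleProdK, BraidedExt.inverseCochain]

theorem admissible_inv_general {A H : Type*} [AddCommGroup A] [AddCommGroup H]
    (h : A → A → A → H) (c : A → A → H)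
    (φ : A ≃+ A) (ψ : H ≃+ H) (k : A → A → H)
    (hk : Admissible h c φ ψ k) :
    Admissible h c φ.symm ψ.symm (fun a b => -ψ.symm (k (φ.symm a) (φ.symm b))) ∧
    ((fun a => φ (φ.symm a)) = (id : A → A) ∧ (fun x => ψ (ψ.symm x)) = (id : H → H) ∧
      tripleProdK (fun a => φ.symm a) (fun x => ψ x)
        k (fun a b => -ψ.symm (k (φ.symm a) (φ.symm b))) = fun _ _ => (0 : H)) ∧
    ((fun a => φ.symm (φ a)) = (id : A → A) ∧ (fun x => ψ.symm (ψ x)) = (id : H → H) ∧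
      tripleProdK (fun a => φ a) (fun x => ψ.symm x)
        (fun a b => -ψ.symm (k (φ.symm a) (φ.symm b))) k = fun _ _ => (0 : H)) :=
  ⟨hk.inv,
    ⟨funext φ.apply_symm_apply, funext ψ.apply_symm_apply,
      tripleProdK_inverseCochain_right φ ψ k⟩,
    ⟨funext φ.symm_apply_apply, funext ψ.symm_apply_apply,
      tripleProdK_inverseCochain_left φ ψ k⟩⟩

/-- **Statement 11.** If the triple `(φ, ψ, k)` is admissible relative to `(h, c)`, then so
is the triple `(φ⁻¹, ψ⁻¹, −ψ⁻¹∘k∘(φ⁻¹×φ⁻¹))`, and the product of `(φ, ψ, k)` with this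
triple, in either order, is `(id_A, id_H, 0)`. -/
theorem admissible_inv {A H : Type*} [AddCommGroup A] [AddCommGroup H]
    (h : A → A → A → H) (c : A → A → H) (habc : IsAbelianCocycle h c)
    (φ : A ≃+ A) (ψ : H ≃+ H) (k : A → A → H)
    (hk : Admissible h c φ ψ k) :
    Admissible h c φ.symm ψ.symm (fun a b => -ψ.symm (k (φ.symm a) (φ.symm b))) ∧
    ((fun a => φ (φ.symm a)) = (id : A → A) ∧ (fun x => ψ (ψ.symm x)) = (id : H → H) ∧
      tripleProdK (fun a => φ.symm a) (fun x => ψ x)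
        k (fun a b => -ψ.symm (k (φ.symm a) (φ.symm b))) = fun _ _ => (0 : H)) ∧
    ((fun a => φ.symm (φ a)) = (id : A → A) ∧ (fun x => ψ.symm (ψ x)) = (id : H → H) ∧
      tripleProdK (fun a => φ a) (fun x => ψ.symm x)
        (fun a b => -ψ.symm (k (φ.symm a) (φ.symm b))) k = fun _ _ => (0 : H)) :=
  admissible_inv_general h c φ ψ k hk

end BraidedExt
end

section
/- Let G be a group acting by automorphisms on abelian groups A and H, let (h, c) be an abelian 3-cocycle on A with values in H, and let (k, θ) be action data for G relative to (h, c). Given for each g ∈ G a normalized 1-cochain η_g : A → H, define k'_g := k_g + dη_g and θ'_{g₁,g₂} := θ_{g₁,g₂} + η_{g₁g₂} − η_{g₁}∘(g₂ ▷ −) − g₁ ▷ η_{g₂}. Then (k', θ') is again action data for G relative to (h, c). -/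
namespace BraidedExt

variable {A H : Type*} [AddCommGroup A] [AddCommGroup H]

variable {G : Type*} [Group G]

section ActionData

variable [DistribMulAction G A] [DistribMulAction G H]

/-- Action data for `G` relative to the abelian 3-cocycle `(h, c)`: for each `g ∈ G` a
normalized 2-cochain `k g` making `(g ▷ −, g ▷ −, k g)` admissible, and for each pair
`g₁, g₂` a normalized 1-cochain `θ g₁ g₂` satisfying the two compatibility conditions. -/
structure IsActionData (h : A → A → A → H) (c : A → A → H)
    (k : G → A → A → H) (θ : G → G → A → H) : Prop where
  adm : ∀ g : G, Admissible h c (fun a => g • a) (fun x => g • x) (k g)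
  θ_norm : ∀ g₁ g₂ : G, Normalized1 (θ g₁ g₂)
  dθ : ∀ (g₁ g₂ : G) (a b : A),
    d1 (θ g₁ g₂) a b = k (g₁ * g₂) a b - k g₁ (g₂ • a) (g₂ • b) - g₁ • k g₂ a b
  θ_assoc : ∀ (g₁ g₂ g₃ : G) (a : A),
    θ (g₁ * g₂) g₃ a + θ g₁ g₂ (g₃ • a) = θ g₁ (g₂ * g₃) a + g₁ • θ g₂ g₃ a

/-- `ω : G² → A` is a normalized 2-cocycle for the action of `G` on `A`. -/
def IsCocycle2 (ω : G → G → A) : Prop :=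
  (∀ g : G, ω g 1 = 0 ∧ ω 1 g = 0) ∧
    ∀ g₁ g₂ g₃ : G, g₁ • ω g₂ g₃ - ω (g₁ * g₂) g₃ + ω g₁ (g₂ * g₃) - ω g₁ g₂ = 0

/-- The cochain-level Pontryagin square: the 4-cochain associated to the abelian 3-cocycle
`(h, c)`, the action data `(k, θ)`, and the 2-cocycle `ω`. -/
def pontryagin (h : A → A → A → H) (c : A → A → H)
    (k : G → A → A → H) (θ : G → G → A → H) (ω : G → G → A) :
    G → G → G → G → H := fun g₁ g₂ g₃ g₄ =>
  c (ω g₁ g₂) ((g₁ * g₂) • ω g₃ g₄)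
    + h ((g₁ * g₂) • ω g₃ g₄) (ω g₁ g₂) (ω (g₁ * g₂) (g₃ * g₄))
    - h ((g₁ * g₂) • ω g₃ g₄) (g₁ • ω g₂ (g₃ * g₄)) (ω g₁ (g₂ * g₃ * g₄))
    + h (g₁ • ω g₂ g₃) (g₁ • ω (g₂ * g₃) g₄) (ω g₁ (g₂ * g₃ * g₄))
    - h (g₁ • ω g₂ g₃) (ω g₁ (g₂ * g₃)) (ω (g₁ * g₂ * g₃) g₄)
    + h (ω g₁ g₂) (ω (g₁ * g₂) g₃) (ω (g₁ * g₂ * g₃) g₄)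
    - h (ω g₁ g₂) ((g₁ * g₂) • ω g₃ g₄) (ω (g₁ * g₂) (g₃ * g₄))
    + θ g₁ g₂ (ω g₃ g₄)
    - k g₁ (g₂ • ω g₃ g₄) (ω g₂ (g₃ * g₄))
    + k g₁ (ω g₂ g₃) (ω (g₂ * g₃) g₄)

/-- A function `ρ : G⁴ → H` is a 4-coboundary for the `G`-action on `H`. -/
def IsCoboundary4 (ρ : G → G → G → G → H) : Prop :=
  ∃ ξ : G → G → G → H, ∀ g₁ g₂ g₃ g₄ : G,
    ρ g₁ g₂ g₃ g₄ =
      g₁ • ξ g₂ g₃ g₄ - ξ (g₁ * g₂) g₃ g₄ + ξ g₁ (g₂ * g₃) g₄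
        - ξ g₁ g₂ (g₃ * g₄) + ξ g₁ g₂ g₃

end ActionData

/-- **Statement 12.** Twisting action data `(k, θ)` by a family of normalized 1-cochains
`η_g : A → H` again yields action data. -/
theorem isActionData_twist {A H : Type*} [AddCommGroup A] [AddCommGroup H]
    {G : Type*} [Group G] [DistribMulAction G A] [DistribMulAction G H]
    (h : A → A → A → H) (c : A → A → H) (habc : IsAbelianCocycle h c)
    (k : G → A → A → H) (θ : G → G → A → H)
    (hkθ : IsActionData h c k θ)
    (η : G → A → H) (hη : ∀ g : G, Normalized1 (η g)) :
    IsActionData h c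
      (fun g a b => k g a b + d1 (η g) a b)
      (fun g₁ g₂ a => θ g₁ g₂ a + η (g₁ * g₂) a - η g₁ (g₂ • a) - g₁ • η g₂ a) := by
  obtain ⟨adm, θn, dθ, θa⟩ := hkθ
  simp only [Normalized1] at hη θn
  constructor
  · intro g
    obtain ⟨n1, n2, n3⟩ := adm g
    refine ⟨fun a => ⟨?_, ?_⟩, fun a b c' => ?_, fun a b => ?_⟩
    · simp [d1, (n1 a).1, hη g]
    · simp [d1, (n1 a).2, hη g]
    · have := n2 a b c'
      simp only [d2, d1] at this ⊢
      rw [← this]; abel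
    · have := n3 a b
      simp only [d1, smul_add, smul_sub] at this ⊢
      rw [add_comm a b]
      rw [← sub_eq_zero] at this ⊢
      rw [← this]; abel
  · intro g₁ g₂
    simp [Normalized1, θn, hη]
  · intro g₁ g₂ a b
    have := dθ g₁ g₂ a b
    simp only [d1, smul_add, smul_sub] at this ⊢
    rw [← sub_eq_zero] at this ⊢
    rw [← this]; abel
  · intro g₁ g₂ g₃ a
    have := θa g₁ g₂ g₃ a
    rw [← sub_eq_zero] at this ⊢
    simp only [mul_smul, mul_assoc, smul_add, smul_sub] at this ⊢
    rw [← this]; abel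


end BraidedExt
end
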